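/- arXiv:2601.16937 — 3 statements merged into one kernel-verified Lean document; each statement's English description precedes it below -/
import Mathlib

section
/- The renormalised R-polynomials satisfy the bar-involution identity: for all y, x ∈ W, the image of r_{y,x} under the involution v ↦ v^{-1} equals (-1)^{ℓ(x)+ℓ(y)} r_{y,x}. Equivalently, r_{y,x}(v^{-1}) = (-1)^{ℓ(x)-ℓ(y)} r_{y,x}(v). -/
open LaurentPolynomial

noncomputable section

/-- A presentation of the Hecke algebra of a Coxeter system `(W, S)` over `ℤ[v,v⁻¹]`. -/
structure HeckeData {B W : Type*} [Group W] {M : CoxeterMatrix B}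
    (cs : CoxeterSystem M W) (H : Type*) [Ring H]
    [Algebra (LaurentPolynomial ℤ) H] where
  δ : W → H
  basis : Module.Basis W (LaurentPolynomial ℤ) H
  basis_eq : ∀ x : W, basis x = δ x
  δ_one : δ 1 = 1
  quad : ∀ i : B, (δ (cs.simple i) + (T 1 : LaurentPolynomial ℤ) • (1 : H)) *
      (δ (cs.simple i) - (T (-1) : LaurentPolynomial ℤ) • (1 : H)) = 0
  mul_eq : ∀ x y : W, cs.length x + cs.length y = cs.length (x * y) →
      δ x * δ y = δ (x * y)

/-- The bar involution on the Hecke algebra: a ring homomorphism which is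
semilinear over the involution `v ↦ v⁻¹` of `ℤ[v,v⁻¹]` and sends `δ_x` to
`(δ_{x⁻¹})⁻¹`. -/
structure BarData {B W : Type*} [Group W] {M : CoxeterMatrix B}
    {cs : CoxeterSystem M W} {H : Type*} [Ring H]
    [Algebra (LaurentPolynomial ℤ) H] (D : HeckeData cs H) where
  bar : H →+* H
  semilinear : ∀ (p : LaurentPolynomial ℤ) (h : H),
      bar (p • h) = (invert p) • bar h
  bar_delta_mul : ∀ x : W, bar (D.δ x) * D.δ x⁻¹ = 1
  delta_mul_bar : ∀ x : W, D.δ x⁻¹ * bar (D.δ x) = 1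

/-- The renormalised `R`-polynomial `r_{y,x}`, defined by
`bar(δ_x) = ∑_y (-1)^{ℓ(x)+ℓ(y)} r_{y,x} δ_y`. -/
def rpoly {B W : Type*} [Group W] {M : CoxeterMatrix B}
    {cs : CoxeterSystem M W} {H : Type*} [Ring H]
    [Algebra (LaurentPolynomial ℤ) H] {D : HeckeData cs H}
    (Bd : BarData D) (y x : W) : LaurentPolynomial ℤ :=
  (-1 : LaurentPolynomial ℤ) ^ (cs.length x + cs.length y) *
    D.basis.repr (Bd.bar (D.δ x)) y

/-!
Induction on `ℓ(x)`. If `s` is a left descent of `x`, then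
`bar(δ_x) = (δ_s + v - v⁻¹) bar(δ_{sx})`, and left multiplication by `δ_s + v - v⁻¹` acts on
coefficients by `h_y ↦ h_{sy} + [sy > y] (v - v⁻¹) h_y`. As `v - v⁻¹` is anti-invariant under
`v ↦ v⁻¹` and `ℓ(sy) = ℓ(y) ± 1`, this operator turns the symmetry
`h_y(v⁻¹) = (-1)^(n + ℓ(y)) h_y(v)` into the same symmetry for `n + 1`.
-/

def LaurentPolynomial.vSubInv : LaurentPolynomial ℤ := T 1 - T (-1)

@[simp]
lemma LaurentPolynomial.invert_vSubInv : invert vSubInv = -vSubInv := by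
  simp [vSubInv]

lemma CoxeterSystem.simple_ne_one {B W : Type*} [Group W] {M : CoxeterMatrix B}
    (cs : CoxeterSystem M W) (i : B) : cs.simple i ≠ 1 := fun h => by
  simpa [h] using cs.length_simple i

namespace HeckeData

variable {B W : Type*} [Group W] {M : CoxeterMatrix B} {cs : CoxeterSystem M W}
  {H : Type*} [Ring H] [Algebra (LaurentPolynomial ℤ) H] (D : HeckeData cs H)

lemma repr_δ (z : W) : D.basis.repr (D.δ z) = Finsupp.single z 1 := by
  rw [← D.basis_eq, D.basis.repr_self]

lemma δ_simple_mul_self (i : B) :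
    D.δ (cs.simple i) * D.δ (cs.simple i) = 1 - vSubInv • D.δ (cs.simple i) := by
  set d := D.δ (cs.simple i)
  have hT : (T 1 : LaurentPolynomial ℤ) * T (-1) = 1 := by
    rw [← T_add, add_neg_cancel, T_zero]
  have expand : (d + (T 1 : LaurentPolynomial ℤ) • (1 : H)) *
      (d - (T (-1) : LaurentPolynomial ℤ) • (1 : H)) = d * d + vSubInv • d - 1 := by
    rw [mul_sub, add_mul, add_mul, smul_mul_assoc, one_mul, mul_smul_comm, mul_one,
      smul_mul_assoc, one_mul, smul_smul, hT, one_smul, vSubInv, sub_smul]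
    abel
  rw [← sub_eq_zero, ← D.quad i, expand]
  abel

lemma δ_simple_mul_δ_simple_add (i : B) :
    D.δ (cs.simple i) * (D.δ (cs.simple i) + vSubInv • 1) = 1 := by
  rw [mul_add, δ_simple_mul_self, mul_smul_comm, mul_one, sub_add_cancel]

lemma δ_eq_δ_simple_mul {x : W} {i : B} (hx : cs.IsLeftDescent x i) :
    D.δ x = D.δ (cs.simple i) * D.δ (cs.simple i * x) := by
  rw [D.mul_eq, cs.simple_mul_simple_cancel_left]
  rw [cs.length_simple, cs.simple_mul_simple_cancel_left, ← cs.isLeftDescent_iff.mp hx]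
  omega

open Classical in
lemma δ_simple_mul (i : B) (z : W) :
    D.δ (cs.simple i) * D.δ z =
      D.δ (cs.simple i * z) + (if cs.IsLeftDescent z i then -vSubInv else 0) • D.δ z := by
  by_cases hz : cs.IsLeftDescent z i
  · conv_lhs => rw [D.δ_eq_δ_simple_mul hz, ← mul_assoc, δ_simple_mul_self, sub_mul,
      one_mul, smul_mul_assoc, ← D.δ_eq_δ_simple_mul hz]
    rw [if_pos hz, neg_smul, sub_eq_add_neg]
  · rw [if_neg hz, zero_smul, add_zero, D.mul_eq]
    rw [cs.length_simple, cs.not_isLeftDescent_iff.mp hz]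
    omega

open Classical in
lemma repr_δ_simple_mul (i : B) (h : H) (y : W) :
    D.basis.repr (D.δ (cs.simple i) * h) y =
      D.basis.repr h (cs.simple i * y) +
        (if cs.IsLeftDescent y i then -vSubInv else 0) * D.basis.repr h y := by
  let c : LaurentPolynomial ℤ := if cs.IsLeftDescent y i then -vSubInv else 0
  have key : (Finsupp.lapply y ∘ₗ D.basis.repr.toLinearMap ∘ₗ
        LinearMap.mulLeft (LaurentPolynomial ℤ) (D.δ (cs.simple i))) =
      Finsupp.lapply (cs.simple i * y) ∘ₗ D.basis.repr.toLinearMap +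
        c • Finsupp.lapply y ∘ₗ D.basis.repr.toLinearMap := by
    refine D.basis.ext fun z => ?_
    simp only [LinearMap.comp_apply, LinearMap.mulLeft_apply, LinearMap.add_apply,
      LinearMap.smul_apply, LinearEquiv.coe_toLinearMap, Finsupp.lapply_apply, D.basis_eq,
      δ_simple_mul, map_add, map_smul, repr_δ, Finsupp.single_apply, smul_eq_mul, c]
    by_cases hzy : z = y
    · subst hzy
      simp [cs.simple_ne_one]
    · have hsz : cs.simple i * z = y ↔ z = cs.simple i * y := by
        rw [← inv_mul_eq_iff_eq_mul, cs.inv_simple]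
      simp [hzy, hsz]
  exact LinearMap.congr_fun key h

def IsBarSymmetric (n : ℕ) (h : H) : Prop :=
  ∀ y, invert (D.basis.repr h y) = (-1) ^ (n + cs.length y) * D.basis.repr h y

lemma isBarSymmetric_one : D.IsBarSymmetric 0 1 := by
  intro y
  rw [← D.δ_one, repr_δ]
  by_cases hy : y = 1 <;> simp [hy]

open Classical in
lemma IsBarSymmetric.δ_simple_add_mul {n : ℕ} {h : H} (hh : D.IsBarSymmetric n h) (i : B) :
    D.IsBarSymmetric (n + 1) ((D.δ (cs.simple i) + vSubInv • 1) * h) := by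
  intro y
  rw [add_mul, smul_mul_assoc, one_mul, map_add, map_smul, Finsupp.add_apply,
    Finsupp.smul_apply, smul_eq_mul, repr_δ_simple_mul]
  by_cases hy : cs.IsLeftDescent y i
  · have hlen := cs.isLeftDescent_iff.mp hy
    rw [if_pos hy, ← hlen]
    simp only [map_add, map_mul, map_neg, invert_vSubInv, hh (cs.simple i * y), hh y, ← hlen]
    ring
  · have hlen := cs.not_isLeftDescent_iff.mp hy
    rw [if_neg hy]
    simp only [map_add, map_mul, map_zero, invert_vSubInv, hh (cs.simple i * y), hh y, hlen]
    ring

end HeckeData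

namespace BarData

variable {B W : Type*} [Group W] {M : CoxeterMatrix B} {cs : CoxeterSystem M W}
  {H : Type*} [Ring H] [Algebra (LaurentPolynomial ℤ) H] {D : HeckeData cs H} (Bd : BarData D)

lemma bar_δ_simple (i : B) : Bd.bar (D.δ (cs.simple i)) = D.δ (cs.simple i) + vSubInv • 1 := by
  have h := Bd.bar_delta_mul (cs.simple i)
  rw [cs.inv_simple] at h
  calc Bd.bar (D.δ (cs.simple i))
      = Bd.bar (D.δ (cs.simple i)) * (D.δ (cs.simple i) * (D.δ (cs.simple i) + vSubInv • 1)) := by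
        rw [D.δ_simple_mul_δ_simple_add, mul_one]
    _ = D.δ (cs.simple i) + vSubInv • 1 := by rw [← mul_assoc, h, one_mul]

lemma bar_δ_of_isLeftDescent {x : W} {i : B} (hx : cs.IsLeftDescent x i) :
    Bd.bar (D.δ x) = (D.δ (cs.simple i) + vSubInv • 1) * Bd.bar (D.δ (cs.simple i * x)) := by
  rw [D.δ_eq_δ_simple_mul hx, map_mul, bar_δ_simple]

lemma isBarSymmetric_bar_δ (x : W) : D.IsBarSymmetric (cs.length x) (Bd.bar (D.δ x)) := by
  induction hn : cs.length x using Nat.strong_induction_on generalizing x with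
  | _ n ih =>
    by_cases hx : x = 1
    · subst hx
      rw [D.δ_one, map_one, ← hn, cs.length_one]
      exact D.isBarSymmetric_one
    obtain ⟨i, hi⟩ := cs.exists_leftDescent_of_ne_one hx
    have hlen : cs.length (cs.simple i * x) + 1 = n := hn ▸ cs.isLeftDescent_iff.mp hi
    rw [bar_δ_of_isLeftDescent Bd hi, ← hlen]
    exact (ih _ (by omega) _ rfl).δ_simple_add_mul D i

end BarData

/-- The bar-involution identity for renormalised `R`-polynomials:
`r̄_{y,x} = (-1)^{ℓ(x)+ℓ(y)} r_{y,x}`. -/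
theorem rpoly_bar {B W : Type*} [Group W] {M : CoxeterMatrix B}
    (cs : CoxeterSystem M W) (H : Type*) [Ring H]
    [Algebra (LaurentPolynomial ℤ) H] (D : HeckeData cs H)
    (Bd : BarData D) (y x : W) :
    invert (rpoly Bd y x) =
      (-1 : LaurentPolynomial ℤ) ^ (cs.length x + cs.length y) * rpoly Bd y x := by
  rw [rpoly, map_mul, map_pow, map_neg, map_one, Bd.isBarSymmetric_bar_δ x y]
end
end

section
/- Let F be a diagonalizable linear operator of degree zero on a finite-dimensional graded complex vector space V = ⊕_{i∈Z} V_i, and let q > 1 be a real number. Assume: (a) every eigenvalue of F on V_i has absolute value q^{i/2}; (b) for every k ≥ 0 the supertrace Σ_i (-1)^i Tr(F^k|_{V_i}) equals Q(q^k) for a fixed Laurent polynomial Q with integer coefficients. Then V_{2i+1} = 0 for all i, F acts on V_{2i} as multiplication by q^i, and Q(q^k) = Σ_i dim(V_{2i}) q^{ik} for all k, i.e. Q(X) = Σ_i dim(V_{2i}) X^i. -/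
/-!
Diagonalizing each `F i`, the supertrace of `F ^ k` is `∑ μ, m(μ) μ ^ k`, where
`m(μ) = ∑ i, (-1) ^ i dim ker (F i - μ)`, while `Q(q ^ k) = ∑ j, a j (q ^ j) ^ k`. Since the
sequences `k ↦ μ ^ k` are linearly independent (Dedekind), `m(μ)` is `a j` if `μ = q ^ j` and `0`
if `μ` is not a power of `q`. Eigenvalues of different weights have different absolute values, so
at most one piece contributes to `m(μ)`; hence every eigenvalue of `F` on `V n` is some `q ^ j`
with `n = 2 j`. This kills the odd pieces and forces `F = q ^ i` on `V (2 i)`, and evaluating at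
`μ = q ^ i` gives `a i = dim V (2 i)`.
-/

open Module Module.End

theorem linearIndependent_pow_seq (K : Type*) [Field K] :
    LinearIndependent K (fun (μ : K) (k : ℕ) => μ ^ k) :=
  (linearIndependent_monoidHom (Multiplicative ℕ) K).comp (powersHom K) (powersHom K).injective

namespace Module.End

variable {K W : Type*} [Field K] [AddCommGroup W] [Module K W]

theorem pow_apply_of_mem_eigenspace {f : End K W} {μ : K} {x : W} (hx : x ∈ f.eigenspace μ)
    (k : ℕ) : (f ^ k) x = μ ^ k • x := by
  induction k with
  | zero => simp
  | succ k ih =>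
    rw [pow_succ, mul_apply, mem_eigenspace_iff.1 hx, map_smul, ih, smul_smul, ← pow_succ']

theorem eigenspace_eq_top_of_forall_hasEigenvalue_eq {f : End K W}
    (hf : ⨆ μ, f.eigenspace μ = ⊤) {μ₀ : K} (h : ∀ μ, f.HasEigenvalue μ → μ = μ₀) :
    f.eigenspace μ₀ = ⊤ := by
  refine eq_top_iff.2 (hf ▸ iSup_le fun μ => ?_)
  by_cases hμ : f.HasEigenvalue μ
  · rw [h μ hμ]
  · rw [not_not.1 (mt hasEigenvalue_iff.2 hμ)]
    exact bot_le

variable [FiniteDimensional K W]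

noncomputable def eigenspaceFinrank (f : End K W) : K →₀ ℕ :=
  Finsupp.onFinset f.finite_hasEigenvalue.toFinset (fun μ => finrank K (f.eigenspace μ))
    fun μ hμ => f.finite_hasEigenvalue.mem_toFinset.2 <| hasEigenvalue_iff.2 (by simpa using hμ)

@[simp]
theorem eigenspaceFinrank_apply (f : End K W) (μ : K) :
    f.eigenspaceFinrank μ = finrank K (f.eigenspace μ) := rfl

theorem trace_pow_eq_sum_eigenspaceFinrank {f : End K W} (hf : ⨆ μ, f.eigenspace μ = ⊤)
    (k : ℕ) : LinearMap.trace K W (f ^ k) = f.eigenspaceFinrank.sum fun μ n => n * μ ^ k := by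
  classical
  have hint : DirectSum.IsInternal f.eigenspace :=
    DirectSum.isInternal_submodule_of_iSupIndep_of_iSup_eq_top f.eigenspaces_iSupIndep hf
  have hmaps (μ : K) : Set.MapsTo (f ^ k) (f.eigenspace μ) (f.eigenspace μ) := fun x hx => by
    rw [SetLike.mem_coe, pow_apply_of_mem_eigenspace hx]
    exact Submodule.smul_mem _ _ hx
  have hres (μ : K) : (f ^ k).restrict (hmaps μ) = μ ^ k • LinearMap.id := by
    ext x
    exact pow_apply_of_mem_eigenspace x.2 k
  rw [LinearMap.trace_eq_sum_trace_restrict' hint f.finite_hasEigenvalue hmaps, eigenspaceFinrank,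
    Finsupp.onFinset_sum _ fun μ => by simp]
  simp only [hres, map_smul, LinearMap.trace_id, smul_eq_mul, mul_comm]
  -- both index sets are `{μ | f.eigenspace μ ≠ ⊥}` up to unfolding `HasEigenvalue`
  rfl

end Module.End

section Graded

variable {V : ℤ → Type*} [∀ i, AddCommGroup (V i)] [∀ i, Module ℂ (V i)]
  {F : ∀ i, End ℂ (V i)} {q : ℝ}

theorem eq_of_rpow_div_two_eq (hq : 1 < q) {i j : ℤ}
    (h : q ^ ((i : ℝ) / 2) = q ^ ((j : ℝ) / 2)) : i = j := by
  have := (Real.rpow_right_inj (by linarith) hq.ne').1 h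
  exact_mod_cast (div_left_inj' two_ne_zero).1 this

theorem injective_ofReal_zpow (hq : 1 < q) : Function.Injective fun j : ℤ => (q : ℂ) ^ j :=
  fun i j h => zpow_right_injective₀ (by linarith) hq.ne' <|
    Complex.ofReal_injective (by push_cast; exact h)

theorem eq_of_hasEigenvalue_of_hasEigenvalue (hq : 1 < q)
    (habs : ∀ (i : ℤ) (μ : ℂ), (F i).HasEigenvalue μ → ‖μ‖ = q ^ ((i : ℝ) / 2))
    {i j : ℤ} {μ : ℂ} (hi : (F i).HasEigenvalue μ) (hj : (F j).HasEigenvalue μ) : i = j :=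
  eq_of_rpow_div_two_eq hq ((habs i μ hi).symm.trans (habs j μ hj))

theorem eq_two_mul_of_hasEigenvalue_zpow (hq : 1 < q)
    (habs : ∀ (i : ℤ) (μ : ℂ), (F i).HasEigenvalue μ → ‖μ‖ = q ^ ((i : ℝ) / 2))
    {i j : ℤ} (h : (F i).HasEigenvalue ((q : ℂ) ^ j)) : i = 2 * j := by
  refine eq_of_rpow_div_two_eq hq ((habs i _ h).symm.trans ?_)
  rw [norm_zpow, Complex.norm_of_nonneg (by linarith), ← Real.rpow_intCast]
  push_cast
  ring_nf

variable [∀ i, FiniteDimensional ℂ (V i)]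

noncomputable def superMultiplicity (s : Finset ℤ) (F : ∀ i, End ℂ (V i)) (μ : ℂ) : ℂ :=
  ∑ i ∈ s, (-1 : ℂ) ^ i * finrank ℂ ((F i).eigenspace μ)

open Finsupp in
theorem superMultiplicity_eq_mapDomain {s : Finset ℤ}
    (hdiag : ∀ i, (⨆ μ : ℂ, (F i).eigenspace μ) = ⊤) {a : ℤ →₀ ℤ}
    (htr : ∀ k : ℕ, (∑ i ∈ s, (-1 : ℂ) ^ i * LinearMap.trace ℂ (V i) ((F i) ^ k)) =
        ∑ i ∈ a.support, (a i : ℂ) * (q : ℂ) ^ (i * (k : ℤ))) (μ : ℂ) :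
    superMultiplicity s F μ = (a.mapDomain ((q : ℂ) ^ ·) μ : ℂ) := by
  set c : ℂ →₀ ℂ :=
    ∑ i ∈ s, (-1 : ℂ) ^ i • (F i).eigenspaceFinrank.mapRange Nat.cast Nat.cast_zero
  set d : ℂ →₀ ℂ := (a.mapRange Int.cast Int.cast_zero).mapDomain ((q : ℂ) ^ ·)
  have hcd : linearCombination ℂ (fun μ (k : ℕ) => μ ^ k) c =
      linearCombination ℂ (fun μ (k : ℕ) => μ ^ k) d := by
    funext k
    rw [map_sum, linearCombination_mapDomain, Finset.sum_apply]
    convert htr k using 1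
    · refine Finset.sum_congr rfl fun i _ => ?_
      rw [trace_pow_eq_sum_eigenspaceFinrank (hdiag i), map_smul, linearCombination_apply,
        sum_mapRange_index (by simp)]
      simp [Finsupp.sum]
    · rw [linearCombination_apply, sum_mapRange_index (by simp)]
      simp [Finsupp.sum, zpow_mul]
  simpa [c, d, superMultiplicity, mapDomain_mapRange] using
    congrArg (· μ) (linearIndependent_pow_seq ℂ hcd)

theorem superMultiplicity_eq_of_forall_ne {s : Finset ℤ} (hs : ∀ i ∉ s, Subsingleton (V i))
    {μ : ℂ} {n : ℤ} (h : ∀ i ≠ n, ¬ (F i).HasEigenvalue μ) :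
    superMultiplicity s F μ = (-1 : ℂ) ^ n * finrank ℂ ((F n).eigenspace μ) := by
  refine Finset.sum_eq_single n (fun i _ hi => ?_) fun hn => ?_
  · exact mul_eq_zero_of_right _ (by simpa [hasEigenvalue_iff] using h i hi)
  · have := hs n hn
    simp [Module.finrank_zero_of_subsingleton]

theorem exists_eq_zpow_of_hasEigenvalue {s : Finset ℤ} (hs : ∀ i ∉ s, Subsingleton (V i))
    (hdiag : ∀ i, (⨆ μ : ℂ, (F i).eigenspace μ) = ⊤) (hq : 1 < q)
    (habs : ∀ (i : ℤ) (μ : ℂ), (F i).HasEigenvalue μ → ‖μ‖ = q ^ ((i : ℝ) / 2))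
    {a : ℤ →₀ ℤ}
    (htr : ∀ k : ℕ, (∑ i ∈ s, (-1 : ℂ) ^ i * LinearMap.trace ℂ (V i) ((F i) ^ k)) =
        ∑ i ∈ a.support, (a i : ℂ) * (q : ℂ) ^ (i * (k : ℤ)))
    {n : ℤ} {μ : ℂ} (hμ : (F n).HasEigenvalue μ) : ∃ j, n = 2 * j ∧ μ = (q : ℂ) ^ j := by
  have hm := superMultiplicity_eq_mapDomain hdiag htr μ
  rw [superMultiplicity_eq_of_forall_ne hs
    fun i hi hi' => hi (eq_of_hasEigenvalue_of_hasEigenvalue hq habs hi' hμ)] at hm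
  obtain ⟨j, rfl⟩ : μ ∈ Set.range ((q : ℂ) ^ · : ℤ → ℂ) := by
    by_contra hrange
    rw [Finsupp.mapDomain_of_notMem_range _ _ hrange] at hm
    simp only [Int.cast_zero, mul_eq_zero, Nat.cast_eq_zero, Submodule.finrank_eq_zero,
      hasEigenvalue_iff.1 hμ, or_false] at hm
    exact zpow_ne_zero n (neg_ne_zero.2 one_ne_zero) hm
  exact ⟨j, eq_two_mul_of_hasEigenvalue_zpow hq habs hμ, rfl⟩

end Graded

/-- Let `V = ⊕_{i∈ℤ} V_i` be a finite-dimensional graded complex vector space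
(all pieces outside a finite set `s` trivial), `F` a degree-zero diagonalizable
operator, `q > 1` real. If every eigenvalue of `F` on `V_i` has absolute value
`q^{i/2}`, and for all `k ≥ 0` the supertrace of `F^k` equals `Q(q^k)` for a
fixed Laurent polynomial `Q = ∑_i a_i X^i` with integer coefficients, then the
odd pieces vanish, `F` acts on `V_{2i}` as multiplication by `q^i`, and
`a_i = dim V_{2i}`. -/
theorem graded_purity_lemma
    (V : ℤ → Type*) [∀ i, AddCommGroup (V i)] [∀ i, Module ℂ (V i)]
    [∀ i, FiniteDimensional ℂ (V i)]
    (s : Finset ℤ) (hs : ∀ i ∉ s, Subsingleton (V i))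
    (F : ∀ i, Module.End ℂ (V i))
    (hdiag : ∀ i, (⨆ μ : ℂ, Module.End.eigenspace (F i) μ) = ⊤)
    (q : ℝ) (hq : 1 < q)
    (habs : ∀ (i : ℤ) (μ : ℂ), Module.End.HasEigenvalue (F i) μ →
      ‖μ‖ = q ^ ((i : ℝ) / 2))
    (a : ℤ →₀ ℤ)
    (htr : ∀ k : ℕ,
      (∑ i ∈ s, (-1 : ℂ) ^ i * LinearMap.trace ℂ (V i) ((F i) ^ k)) =
        ∑ i ∈ a.support, (a i : ℂ) * ((q : ℂ)) ^ (i * (k : ℤ))) :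
    (∀ i : ℤ, Subsingleton (V (2 * i + 1))) ∧
      (∀ (i : ℤ) (x : V (2 * i)), F (2 * i) x = ((q : ℂ) ^ i) • x) ∧
      (∀ i : ℤ, a i = (Module.finrank ℂ (V (2 * i)) : ℤ)) := by
  have hpure {n : ℤ} {μ : ℂ} (hμ : (F n).HasEigenvalue μ) :=
    exists_eq_zpow_of_hasEigenvalue hs hdiag hq habs htr hμ
  have htop (i : ℤ) : (F (2 * i)).eigenspace ((q : ℂ) ^ i) = ⊤ :=
    eigenspace_eq_top_of_forall_hasEigenvalue_eq (hdiag _) fun μ hμ => by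
      obtain ⟨j, hij, rfl⟩ := hpure hμ
      rw [show i = j by omega]
  refine ⟨fun i => ?_, fun i x => mem_eigenspace_iff.1 (htop i ▸ Submodule.mem_top), fun i => ?_⟩
  · by_contra! hV
    obtain ⟨μ, hμ⟩ := (F (2 * i + 1)).exists_eigenvalue
    obtain ⟨j, hj, -⟩ := hpure hμ
    omega
  · have hm := superMultiplicity_eq_mapDomain hdiag htr ((q : ℂ) ^ i)
    rw [superMultiplicity_eq_of_forall_ne hs
        fun n hn hn' => hn (eq_two_mul_of_hasEigenvalue_zpow hq habs hn'),
      Finsupp.mapDomain_apply (injective_ofReal_zpow hq), htop, finrank_top,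
      Even.neg_one_zpow ⟨i, two_mul i⟩, one_mul] at hm
    exact_mod_cast hm.symm
end

section
/- Let A be an algebra over a complete local ring, e an idempotent in A such that the corner algebra eAe is local, and π: A → B a surjective algebra homomorphism. If π(e) = e_1 + e_2 with e_1, e_2 orthogonal idempotents in B satisfying π(e)·e_1 = e_1 and π(e)·e_2 = e_2, and there exists a lift ẽ_1 ∈ A with π(ẽ_1) = e_1, then e_1 = π(e) or e_2 = π(e) (i.e. the idempotent π(e) does not split nontrivially within the image of the corner). More precisely: the element e·ẽ_1·e lies in the local ring eAe, hence is either a unit or in the maximal ideal; if it is a unit then e_1 = π(e), and if e·ẽ_2·e is a unit (ẽ_2 := e - ẽ_1 appropriately) then e_2 = π(e). -/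
/-!
The lift `e ẽ₁ e` of `e₁` lies in the local corner ring `eAe`, so it or its complement
`e - e ẽ₁ e` (a lift of `e₂`) is a unit there. Units of the corner map to units of the corner
`π(e) B π(e)`, and a summand of an orthogonal idempotent decomposition `π(e) = e₁ + e₂` that has a
right inverse in that corner kills the other summand: `e₂ = e₂ π(e) = e₂ e₁ z = 0`.
-/

noncomputable section

/-- `x` is a unit of the corner ring `eAe` (with unit `e`). -/
def IsCornerUnit {A : Type*} [Ring A] (e x : A) : Prop :=
  ∃ y : A, e * y * e = y ∧ x * y = e ∧ y * x = e

/-- The corner ring `eAe` is local: every element of the corner is a unit of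
the corner, or its complement `e - x` is. -/
def CornerLocal {A : Type*} [Ring A] (e : A) : Prop :=
  ∀ x : A, e * x * e = x → (IsCornerUnit e x ∨ IsCornerUnit e (e - x))

theorem IsCornerUnit.map {A B : Type*} [Ring A] [Ring B] (f : A →+* B) {e x : A}
    (h : IsCornerUnit e x) : IsCornerUnit (f e) (f x) := by
  obtain ⟨y, hy, hxy, hyx⟩ := h
  exact ⟨f y, by rw [← map_mul, ← map_mul, hy], by rw [← map_mul, hxy], by rw [← map_mul, hyx]⟩

theorem eq_zero_of_isCornerUnit_add {B : Type*} [Ring B] {e₁ e₂ : B}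
    (he₂ : IsIdempotentElem e₂) (h₂₁ : e₂ * e₁ = 0) (hu : IsCornerUnit (e₁ + e₂) e₁) :
    e₂ = 0 := by
  obtain ⟨z, -, hz, -⟩ := hu
  calc e₂ = e₂ * (e₁ + e₂) := by rw [mul_add, h₂₁, he₂.eq, zero_add]
    _ = e₂ * e₁ * z := by rw [← hz, mul_assoc]
    _ = 0 := by rw [h₂₁, zero_mul]

theorem corner_local_idempotent_no_split_general {A B : Type*} [Ring A] [Ring B]
    (π : A →+* B)
    (e : A) (he : e * e = e) (hloc : CornerLocal e)
    (e₁ e₂ : B) (he₁ : e₁ * e₁ = e₁) (he₂ : e₂ * e₂ = e₂)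
    (horth : e₁ * e₂ = 0 ∧ e₂ * e₁ = 0)
    (hsum : π e = e₁ + e₂)
    (etilde₁ : A) (hlift : π etilde₁ = e₁) :
    e₁ = π e ∨ e₂ = π e := by
  set x := e * etilde₁ * e with hx_def
  have hx : e * x * e = x := by
    simp only [hx_def, ← mul_assoc, he]
    simp only [mul_assoc, he]
  have hπx : π x = e₁ := by
    rw [hx_def, map_mul, map_mul, hlift, hsum, add_mul, he₁, horth.2, add_zero, mul_add, he₁,
      horth.1, add_zero]
  have hπx' : π (e - x) = e₂ := by rw [map_sub, hπx, hsum, add_sub_cancel_left]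
  rw [hsum]
  rcases hloc x hx with hunit | hunit
  · have hunit' := hunit.map π
    rw [hπx, hsum] at hunit'
    left
    rw [eq_zero_of_isCornerUnit_add he₂ horth.2 hunit', add_zero]
  · have hunit' := hunit.map π
    rw [hπx', hsum, add_comm] at hunit'
    right
    rw [eq_zero_of_isCornerUnit_add he₁ horth.1 hunit', zero_add]

/-- Let `e` be an idempotent in a ring `A` whose corner ring `eAe` is local,
and `π : A → B` a surjective ring homomorphism. If `π(e) = e₁ + e₂` with
`e₁, e₂` orthogonal idempotents satisfying `π(e)·eᵢ = eᵢ`, and `e₁` admits a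
lift `etilde₁` along `π`, then `e₁ = π(e)` or `e₂ = π(e)`: the idempotent `π(e)`
does not split nontrivially. -/
theorem corner_local_idempotent_no_split {A B : Type*} [Ring A] [Ring B]
    (π : A →+* B) (hπ : Function.Surjective π)
    (e : A) (he : e * e = e) (hloc : CornerLocal e)
    (e₁ e₂ : B) (he₁ : e₁ * e₁ = e₁) (he₂ : e₂ * e₂ = e₂)
    (horth : e₁ * e₂ = 0 ∧ e₂ * e₁ = 0)
    (hsum : π e = e₁ + e₂)
    (habs₁ : π e * e₁ = e₁) (habs₂ : π e * e₂ = e₂)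
    (etilde₁ : A) (hlift : π etilde₁ = e₁) :
    e₁ = π e ∨ e₂ = π e :=
  corner_local_idempotent_no_split_general π e he hloc e₁ e₂ he₁ he₂ horth hsum etilde₁ hlift
end
end
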